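/- In the additive group of F_25 = Z/5[x]/(x²+2), the sets B_1 = B'_1 ∪ (-B'_1), B_2 = B'_2 ∪ (-B'_2), B_3 = B'_3 ∪ {0} ∪ (-B'_3), B_4 = B'_4 ∪ {0} ∪ (-B'_4), where B'_1 = {1,2,1+x,1-2x,2+x,2+2x}, B'_2 = {1,2,x,2x,1+x,2+2x}, B'_3 = {1,2,2-x,2-2x}, B'_4 = {1+x,1-x,1+2x,2+2x}, form a symmetric supplementary difference set with parameters (25; 12, 12, 9, 9; 17). -/

import Mathlib

open Polynomial

/-- The field F₂₅ = ℤ/5[x]/(x²+2). -/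
noncomputable abbrev F25 : Type := AdjoinRoot (X ^ 2 + 2 : (ZMod 5)[X])

/-- Number of representations of `a` as a difference u - v with u, v ∈ S. -/
noncomputable def diffCount {G : Type*} [AddCommGroup G] (S : Set G) (a : G) : ℕ :=
  Set.ncard {p : G × G | p.1 ∈ S ∧ p.2 ∈ S ∧ p.1 - p.2 = a}

/-!
Writing elements of F₂₅ in the basis `1, x` is an additive isomorphism with `(ℤ/5)²`, and
`diffCount` is invariant under injective additive maps. So all four claims transfer to explicit
finite sets of pairs in `(ℤ/5)²`, where they are decided by computation; symmetry needs no
computation since each `Bᵢ` has the form `S ∪ -S` or `S ∪ {0} ∪ -S`.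
-/

open Finset

section DiffCount

variable {G H F : Type*} [AddCommGroup G] [AddCommGroup H] [FunLike F G H]
  [AddMonoidHomClass F G H] {f : F}

lemma diffCount_image (hf : Function.Injective f) (S : Set G) (a : G) :
    diffCount (f '' S) (f a) = diffCount S a := by
  rw [diffCount, diffCount, ← Set.ncard_image_of_injective _ (hf.prodMap hf)]
  congr 1
  ext ⟨u, v⟩
  simp only [Set.mem_ofPred_eq, Set.mem_image, Prod.exists, Prod.map, Prod.mk.injEq]
  constructor
  · rintro ⟨⟨p, hp, rfl⟩, ⟨q, hq, rfl⟩, hpq⟩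
    exact ⟨p, q, ⟨hp, hq, hf (by rwa [map_sub])⟩, rfl, rfl⟩
  · rintro ⟨p, q, ⟨hp, hq, rfl⟩, rfl, rfl⟩
    exact ⟨⟨p, hp, rfl⟩, ⟨q, hq, rfl⟩, (map_sub f p q).symm⟩

lemma diffCount_coe_finset [DecidableEq G] (D : Finset G) (a : G) :
    diffCount (D : Set G) a = #{p ∈ D ×ˢ D | p.1 - p.2 = a} := by
  rw [diffCount, ← Set.ncard_coe_finset]
  congr 1
  ext
  simp [and_assoc]

lemma diffCount_eq_card_of_image_eq [DecidableEq H] (hf : Function.Injective f) {S : Set G}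
    {D : Finset H} (h : f '' S = D) (a : G) :
    diffCount S a = #{p ∈ D ×ˢ D | p.1 - p.2 = f a} := by
  rw [← diffCount_image hf, h, diffCount_coe_finset]

end DiffCount

namespace Set

open Pointwise

lemma neg_union_neg_self {G : Type*} [InvolutiveNeg G] (s : Set G) : -(s ∪ -s) = s ∪ -s := by
  rw [union_neg, neg_neg, union_comm]

lemma neg_union_zero_union_neg_self {G : Type*} [SubtractionMonoid G] (s : Set G) :
    -(s ∪ {0} ∪ -s) = s ∪ {0} ∪ -s := by
  ext
  simp only [union_neg, neg_neg, neg_singleton, neg_zero, mem_union]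
  tauto

variable {G H F : Type*} [AddGroup G] [SubtractionMonoid H] [FunLike F G H]
  [AddMonoidHomClass F G H] {f : F} {s : Set G} {D : Finset H} [DecidableEq H]

lemma image_union_neg_of_image_eq (h : f '' s = D) : f '' (s ∪ -s) = ↑(D ∪ -D) := by
  rw [image_union, image_neg, h, Finset.coe_union, Finset.coe_neg]

lemma image_union_zero_union_neg_of_image_eq (h : f '' s = D) :
    f '' (s ∪ {0} ∪ -s) = ↑(D ∪ {0} ∪ -D) := by
  rw [image_union, image_union, image_neg, h, image_singleton, map_zero, Finset.coe_union,
    Finset.coe_union, Finset.coe_singleton, Finset.coe_neg]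

end Set

section OfNat

variable {A M F : Type*} [NonAssocSemiring A] [AddCommMonoid M] [FunLike F A M]
  [AddMonoidHomClass F A M]

lemma map_ofNat_mul (f : F) (n : ℕ) [n.AtLeastTwo] (y : A) : f (ofNat(n) * y) = n • f y := by
  rw [← map_nsmul, nsmul_eq_mul]
  rfl

lemma map_ofNat_eq_nsmul (f : F) (n : ℕ) [n.AtLeastTwo] : f ofNat(n) = n • f 1 := by
  rw [← map_ofNat_mul, mul_one]

end OfNat

namespace AdjoinRoot

variable {R : Type*} [CommRing R] {f : R[X]} (hf : f.Monic) (hdeg : f.natDegree = 2)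

noncomputable def basisOfNatDegreeEqTwo : Module.Basis (Fin 2) R (AdjoinRoot f) :=
  (powerBasis' hf).basis.reindex (finCongr hdeg)

/-- Coordinates with respect to the basis `1, root f`. -/
noncomputable def coordsOfNatDegreeEqTwo : AdjoinRoot f ≃ₗ[R] R × R :=
  (basisOfNatDegreeEqTwo hf hdeg).equivFun.trans (LinearEquiv.finTwoArrow R R)

lemma basisOfNatDegreeEqTwo_apply (i : Fin 2) :
    basisOfNatDegreeEqTwo hf hdeg i = root f ^ (i : ℕ) := by
  simp only [basisOfNatDegreeEqTwo, Module.Basis.reindex_apply, PowerBasis.coe_basis,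
    powerBasis'_gen]
  rfl

@[simp]
lemma coordsOfNatDegreeEqTwo_one : coordsOfNatDegreeEqTwo hf hdeg 1 = (1, 0) := by
  rw [← pow_zero (root f), ← Fin.val_zero 2, ← basisOfNatDegreeEqTwo_apply hf hdeg]
  simp [coordsOfNatDegreeEqTwo]

@[simp]
lemma coordsOfNatDegreeEqTwo_root : coordsOfNatDegreeEqTwo hf hdeg (root f) = (0, 1) := by
  rw [← pow_one (root f), ← Fin.val_one 0, ← basisOfNatDegreeEqTwo_apply hf hdeg]
  simp [coordsOfNatDegreeEqTwo]

end AdjoinRoot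

namespace F25

open Pointwise

lemma monic_X_sq_add_two : (X ^ 2 + 2 : (ZMod 5)[X]).Monic := by
  monicity!

lemma natDegree_X_sq_add_two : (X ^ 2 + 2 : (ZMod 5)[X]).natDegree = 2 := by
  compute_degree!

noncomputable abbrev coords : F25 ≃+ ZMod 5 × ZMod 5 :=
  (AdjoinRoot.coordsOfNatDegreeEqTwo monic_X_sq_add_two natDegree_X_sq_add_two).toAddEquiv

-- The sets `B'ᵢ` in the coordinates `a + b x ↦ (a, b)`.

def D1 : Finset (ZMod 5 × ZMod 5) := {(1, 0), (2, 0), (1, 1), (1, -2), (2, 1), (2, 2)}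

def D2 : Finset (ZMod 5 × ZMod 5) := {(1, 0), (2, 0), (0, 1), (0, 2), (1, 1), (2, 2)}

def D3 : Finset (ZMod 5 × ZMod 5) := {(1, 0), (2, 0), (2, -1), (2, -2)}

def D4 : Finset (ZMod 5 × ZMod 5) := {(1, 1), (1, -1), (1, 2), (2, 2)}

lemma card_D_union_neg : #(D1 ∪ -D1) = 12 ∧ #(D2 ∪ -D2) = 12 ∧
    #(D3 ∪ {0} ∪ -D3) = 9 ∧ #(D4 ∪ {0} ∪ -D4) = 9 := by
  decide

lemma sum_card_filter_sub_eq_seventeen (a : ZMod 5 × ZMod 5) (ha : a ≠ 0) :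
    #{p ∈ (D1 ∪ -D1) ×ˢ (D1 ∪ -D1) | p.1 - p.2 = a} +
      #{p ∈ (D2 ∪ -D2) ×ˢ (D2 ∪ -D2) | p.1 - p.2 = a} +
      #{p ∈ (D3 ∪ {0} ∪ -D3) ×ˢ (D3 ∪ {0} ∪ -D3) | p.1 - p.2 = a} +
      #{p ∈ (D4 ∪ {0} ∪ -D4) ×ˢ (D4 ∪ {0} ∪ -D4) | p.1 - p.2 = a} = 17 := by
  revert a
  decide

end F25

open F25 in
/-- in F₂₅, the four sets B₁,...,B₄ below form a symmetric SDS with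
parameters (25; 12, 12, 9, 9; 17). -/
theorem stmt11 (x : F25) (hx : x = AdjoinRoot.root _)
    (B1' B2' B3' B4' B1 B2 B3 B4 : Set F25)
    (hB1' : B1' = {1, 2, 1 + x, 1 - 2*x, 2 + x, 2 + 2*x})
    (hB2' : B2' = {1, 2, x, 2*x, 1 + x, 2 + 2*x})
    (hB3' : B3' = {1, 2, 2 - x, 2 - 2*x})
    (hB4' : B4' = {1 + x, 1 - x, 1 + 2*x, 2 + 2*x})
    (hB1 : B1 = B1' ∪ (-B1'))
    (hB2 : B2 = B2' ∪ (-B2'))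
    (hB3 : B3 = B3' ∪ {0} ∪ (-B3'))
    (hB4 : B4 = B4' ∪ {0} ∪ (-B4')) :
    B1.ncard = 12 ∧ B2.ncard = 12 ∧ B3.ncard = 9 ∧ B4.ncard = 9 ∧
    B1 = -B1 ∧ B2 = -B2 ∧ B3 = -B3 ∧ B4 = -B4 ∧
    ∀ a : F25, a ≠ 0 →
      diffCount B1 a + diffCount B2 a + diffCount B3 a + diffCount B4 a = 17 := by
  subst hx hB1 hB2 hB3 hB4
  obtain ⟨hD1, hD2, hD3, hD4⟩ : coords '' B1' = D1 ∧ coords '' B2' = D2 ∧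
      coords '' B3' = D3 ∧ coords '' B4' = D4 := by
    subst hB1' hB2' hB3' hB4'
    refine ⟨?_, ?_, ?_, ?_⟩ <;>
      simp [D1, D2, D3, D4, Set.image_insert_eq, map_ofNat_mul, map_ofNat_eq_nsmul]
  have hC1 := Set.image_union_neg_of_image_eq hD1
  have hC2 := Set.image_union_neg_of_image_eq hD2
  have hC3 := Set.image_union_zero_union_neg_of_image_eq hD3
  have hC4 := Set.image_union_zero_union_neg_of_image_eq hD4
  have ncard_eq {B : Set F25} {D : Finset (ZMod 5 × ZMod 5)} (h : coords '' B = D) :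
      B.ncard = #D := by
    rw [← Set.ncard_image_of_injective B coords.injective, h, Set.ncard_coe_finset]
  obtain ⟨c1, c2, c3, c4⟩ := card_D_union_neg
  refine ⟨(ncard_eq hC1).trans c1, (ncard_eq hC2).trans c2, (ncard_eq hC3).trans c3,
    (ncard_eq hC4).trans c4, (Set.neg_union_neg_self _).symm, (Set.neg_union_neg_self _).symm,
    (Set.neg_union_zero_union_neg_self _).symm, (Set.neg_union_zero_union_neg_self _).symm,
    fun a ha => ?_⟩
  rw [diffCount_eq_card_of_image_eq coords.injective hC1,
    diffCount_eq_card_of_image_eq coords.injective hC2,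
    diffCount_eq_card_of_image_eq coords.injective hC3,
    diffCount_eq_card_of_image_eq coords.injective hC4]
  exact sum_card_filter_sub_eq_seventeen _ ((map_ne_zero_iff coords coords.injective).mpr ha)
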